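/- arXiv:1807.04414 — 7 statements merged into one kernel-verified Lean document; each statement's English description precedes it below -/
import Mathlib

section
/- Any maximizer of total capacity over lane assignments has at most one mixed lane: if α* = (α*₁,...,α*ₙ) ∈ [0,1]ⁿ maximizes C(α) = Σᵢ c(αᵢ) subject to the flow-conservation constraint Σᵢ (αᵢ - ᾱ)·c(αᵢ) = 0, then at most one coordinate of α* lies in the open interval (0,1). -/
/-!
The excess `e α = (α - abar) * c α` of a lane is strictly increasing on `[0, 1]`, and capacity is
a strictly convex function of excess: between `x` and `y` the ratio of the increments of `c` and
`e` is `k (x + y) / (L + h + k x y - abar k (x + y))` with `k = h - hb`, which increases in both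
`x` and `y`. If two lanes were mixed, moving one towards `0` and the other towards `1` at constant
total excess would therefore strictly increase total capacity.
-/

open Finset Function Set

theorem Finset.sum_comp_update_add {ι α M : Type*} [Fintype ι] [DecidableEq ι] [AddCommMonoid M]
    (F : α → M) (g : ι → α) (i : ι) (v : α) :
    ∑ l, F (update g i v l) + F (g i) = ∑ l, F (g l) + F v := by
  rw [← comp_def F (update g i v), comp_update, sum_update_of_mem (mem_univ i),
    sum_eq_add_sum_sdiff_singleton_of_mem (mem_univ i)]
  simp only [comp_apply]
  abel

theorem exists_lt_lt_add_eq_add {f : ℝ → ℝ} {u v a b : ℝ} (hf : ContinuousOn f (Icc u v))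
    (hmono : StrictMonoOn f (Icc u v)) (ha : a ∈ Ioo u v) (hb : b ∈ Ioo u v) :
    ∃ x ∈ Icc u v, x < a ∧ ∃ y ∈ Icc u v, b < y ∧ f x + f y = f a + f b := by
  have huv : u ≤ v := ha.1.le.trans ha.2.le
  have hfa : f u < f a := hmono (left_mem_Icc.2 huv) (Ioo_subset_Icc_self ha) ha.1
  have hfb : f b < f v := hmono (Ioo_subset_Icc_self hb) (right_mem_Icc.2 huv) hb.2
  rcases le_total (f u + f v) (f a + f b) with hle | hle
  · obtain ⟨x, hx, hfx⟩ := intermediate_value_Icc ha.1.le (hf.mono (Icc_subset_Icc le_rfl ha.2.le))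
      (⟨by linarith, by linarith⟩ : f a + f b - f v ∈ Icc (f u) (f a))
    refine ⟨x, ⟨hx.1, hx.2.trans ha.2.le⟩, hx.2.lt_of_ne ?_, v, right_mem_Icc.2 huv, hb.2,
      by linarith⟩
    rintro rfl
    linarith
  · obtain ⟨y, hy, hfy⟩ := intermediate_value_Icc hb.2.le (hf.mono (Icc_subset_Icc hb.1.le le_rfl))
      (⟨by linarith, by linarith⟩ : f a + f b - f u ∈ Icc (f b) (f v))
    refine ⟨u, left_mem_Icc.2 huv, ha.1, y, ⟨hb.1.le.trans hy.1, hy.2⟩, hy.1.lt_of_ne' ?_,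
      by linarith⟩
    rintro rfl
    linarith

/-- `hconv` says that `c` is strictly convex as a function of `f`, in chord-slope form. -/
theorem eq_of_mem_Ioo_of_forall_sum_le {ι : Type*} [Fintype ι] [DecidableEq ι] {c f : ℝ → ℝ}
    {u v : ℝ} (hf : ContinuousOn f (Icc u v)) (hmono : StrictMonoOn f (Icc u v))
    (hconv : ∀ ⦃p q r s : ℝ⦄, u ≤ p → p < q → q ≤ r → r < s → s ≤ v →
      f q - f p = f s - f r → c q - c p < c s - c r)
    {α : ι → ℝ} (hα : ∀ i, α i ∈ Icc u v)
    (hopt : ∀ β : ι → ℝ, (∀ i, β i ∈ Icc u v) → ∑ i, f (β i) = ∑ i, f (α i) →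
      ∑ i, c (β i) ≤ ∑ i, c (α i))
    {i j : ι} (hi : α i ∈ Ioo u v) (hj : α j ∈ Ioo u v) : i = j := by
  wlog hij : α i ≤ α j generalizing i j
  · exact (this hj hi (le_of_not_ge hij)).symm
  by_contra hne
  obtain ⟨x, hx, hxi, y, hy, hjy, hxy⟩ := exists_lt_lt_add_eq_add hf hmono hi hj
  have hsum (F : ℝ → ℝ) : ∑ l, F (update (update α i x) j y l)
      = ∑ l, F (α l) - F (α i) - F (α j) + F x + F y := by
    have h₁ := sum_comp_update_add F (update α i x) j y
    have h₂ := sum_comp_update_add F α i x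
    rw [update_of_ne (Ne.symm hne)] at h₁
    linarith
  have hβ : ∀ l, update (update α i x) j y l ∈ Icc u v :=
    (forall_update_iff _ fun _ z => z ∈ Icc u v).2
      ⟨hy, fun l _ => (forall_update_iff _ fun _ z => z ∈ Icc u v).2 ⟨hx, fun l _ => hα l⟩ l⟩
  have hgain := hconv hx.1 hxi hij hjy hy.2 (by linarith)
  have hle := hopt _ hβ (by rw [hsum]; linarith)
  rw [hsum] at hle
  linarith

noncomputable def laneCapacity (d L h hb α : ℝ) : ℝ := d / (L + α ^ 2 * hb + (1 - α ^ 2) * h)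

noncomputable def laneExcess (abar d L h hb α : ℝ) : ℝ := (α - abar) * laneCapacity d L h hb α

noncomputable def capacitySlope (abar L h hb x y : ℝ) : ℝ :=
  (h - hb) * (x + y) / (L + h + (h - hb) * (x * y) - abar * (h - hb) * (x + y))

section

variable {abar d L h hb : ℝ}

theorem laneCapacity_den_pos (hL : 0 < L) (hhb : 0 ≤ hb) (hbh : hb ≤ h) {α : ℝ}
    (hα : α ∈ Icc (0 : ℝ) 1) : 0 < L + α ^ 2 * hb + (1 - α ^ 2) * h := by
  have : α ^ 2 ≤ 1 := pow_le_one₀ hα.1 hα.2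
  nlinarith [mul_nonneg (sub_nonneg.2 this) (hhb.trans hbh)]

theorem capacitySlope_den_pos (hL : 0 < L) (hhb : 0 ≤ hb) (hbh : hb ≤ h) (habar : abar ≤ 1)
    {x y : ℝ} (hx : x ∈ Icc (0 : ℝ) 1) (hy : y ∈ Icc (0 : ℝ) 1) :
    0 < L + h + (h - hb) * (x * y) - abar * (h - hb) * (x + y) := by
  have hk : 0 ≤ h - hb := sub_nonneg.2 hbh
  -- the left side is `L + hb + (h - hb) (1 - x) (1 - y) + (1 - abar) (h - hb) (x + y)`
  nlinarith [mul_nonneg (mul_nonneg hk (sub_nonneg.2 hx.2)) (sub_nonneg.2 hy.2),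
    mul_nonneg (mul_nonneg (sub_nonneg.2 habar) hk) (add_nonneg hx.1 hy.1)]

theorem laneExcess_sub_laneExcess (hL : 0 < L) (hhb : 0 ≤ hb) (hbh : hb ≤ h)
    {x y : ℝ} (hx : x ∈ Icc (0 : ℝ) 1) (hy : y ∈ Icc (0 : ℝ) 1) :
    laneExcess abar d L h hb y - laneExcess abar d L h hb x
      = d * (y - x) * (L + h + (h - hb) * (x * y) - abar * (h - hb) * (x + y))
        / ((L + x ^ 2 * hb + (1 - x ^ 2) * h) * (L + y ^ 2 * hb + (1 - y ^ 2) * h)) := by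
  have hDx := (laneCapacity_den_pos hL hhb hbh hx).ne'
  have hDy := (laneCapacity_den_pos hL hhb hbh hy).ne'
  unfold laneExcess laneCapacity
  rw [mul_div_assoc', mul_div_assoc', div_sub_div _ _ hDy hDx,
    div_eq_div_iff (mul_ne_zero hDy hDx) (mul_ne_zero hDx hDy)]
  ring

theorem laneCapacity_sub_laneCapacity (hL : 0 < L) (hhb : 0 ≤ hb) (hbh : hb ≤ h)
    {x y : ℝ} (hx : x ∈ Icc (0 : ℝ) 1) (hy : y ∈ Icc (0 : ℝ) 1) :
    laneCapacity d L h hb y - laneCapacity d L h hb x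
      = d * (y - x) * ((h - hb) * (x + y))
        / ((L + x ^ 2 * hb + (1 - x ^ 2) * h) * (L + y ^ 2 * hb + (1 - y ^ 2) * h)) := by
  have hDx := (laneCapacity_den_pos hL hhb hbh hx).ne'
  have hDy := (laneCapacity_den_pos hL hhb hbh hy).ne'
  unfold laneCapacity
  rw [div_sub_div _ _ hDy hDx, div_eq_div_iff (mul_ne_zero hDy hDx) (mul_ne_zero hDx hDy)]
  ring

theorem laneCapacity_sub_eq_mul_capacitySlope (hL : 0 < L) (hhb : 0 ≤ hb) (hbh : hb ≤ h)
    (habar : abar ≤ 1) {x y : ℝ} (hx : x ∈ Icc (0 : ℝ) 1) (hy : y ∈ Icc (0 : ℝ) 1) :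
    laneCapacity d L h hb y - laneCapacity d L h hb x
      = (laneExcess abar d L h hb y - laneExcess abar d L h hb x)
        * capacitySlope abar L h hb x y := by
  have hE := (capacitySlope_den_pos hL hhb hbh habar hx hy).ne'
  rw [laneCapacity_sub_laneCapacity hL hhb hbh hx hy, laneExcess_sub_laneExcess hL hhb hbh hx hy,
    capacitySlope, div_mul_div_comm, mul_right_comm (d * (y - x)), mul_div_mul_right _ _ hE]

theorem strictMonoOn_laneExcess (hd : 0 < d) (hL : 0 < L) (hhb : 0 ≤ hb) (hbh : hb ≤ h)
    (habar : abar ≤ 1) : StrictMonoOn (laneExcess abar d L h hb) (Icc 0 1) := by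
  intro x hx y hy hxy
  rw [← sub_pos, laneExcess_sub_laneExcess hL hhb hbh hx hy]
  exact div_pos
    (mul_pos (mul_pos hd (sub_pos.2 hxy)) (capacitySlope_den_pos hL hhb hbh habar hx hy))
    (mul_pos (laneCapacity_den_pos hL hhb hbh hx) (laneCapacity_den_pos hL hhb hbh hy))

theorem continuousOn_laneExcess (hL : 0 < L) (hhb : 0 ≤ hb) (hbh : hb ≤ h) :
    ContinuousOn (laneExcess abar d L h hb) (Icc 0 1) := by
  unfold laneExcess laneCapacity
  exact (continuousOn_id.sub continuousOn_const).mul <| continuousOn_const.div (by fun_prop)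
    fun x hx => (laneCapacity_den_pos hL hhb hbh hx).ne'

theorem capacitySlope_lt (hL : 0 < L) (hhb : 0 ≤ hb) (hbh : hb < h) (habar : abar ≤ 1)
    {p q r s : ℝ} (hp : 0 ≤ p) (hq : 0 ≤ q) (hr : r ≤ 1) (hs : s ≤ 1) (hpr : p < r) (hqs : q < s) :
    capacitySlope abar L h hb p q < capacitySlope abar L h hb r s := by
  have hk : 0 < h - hb := sub_pos.2 hbh
  rw [capacitySlope, capacitySlope,
    div_lt_div_iff₀ (capacitySlope_den_pos hL hhb hbh.le habar ⟨hp, by linarith⟩ ⟨hq, by linarith⟩)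
      (capacitySlope_den_pos hL hhb hbh.le habar ⟨by linarith, hr⟩ ⟨by linarith, hs⟩)]
  -- the `abar` terms cancel; what remains uses `p r ≤ 1`, `q s ≤ 1` and `h - hb < L + h`
  have hpr1 : p * r ≤ 1 := mul_le_one₀ (by linarith) (by linarith) hr
  have hqs1 : q * s ≤ 1 := mul_le_one₀ (by linarith) (by linarith) hs
  have key : (p + q) * (L + h + (h - hb) * (r * s)) < (r + s) * (L + h + (h - hb) * (p * q)) := by
    nlinarith [mul_nonneg (mul_nonneg hk.le (sub_nonneg.2 hpr1)) (sub_nonneg.2 hqs.le),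
      mul_nonneg (mul_nonneg hk.le (sub_nonneg.2 hqs1)) (sub_nonneg.2 hpr.le),
      mul_pos (add_pos_of_pos_of_nonneg hL hhb) (add_pos (sub_pos.2 hpr) (sub_pos.2 hqs))]
  linear_combination (h - hb) * key

theorem laneCapacity_chord_lt (hd : 0 < d) (hL : 0 < L) (hhb : 0 ≤ hb) (hbh : hb < h)
    (habar : abar ≤ 1) {p q r s : ℝ} (hp : 0 ≤ p) (hpq : p < q) (hqr : q ≤ r) (hrs : r < s)
    (hs : s ≤ 1)
    (heq : laneExcess abar d L h hb q - laneExcess abar d L h hb p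
      = laneExcess abar d L h hb s - laneExcess abar d L h hb r) :
    laneCapacity d L h hb q - laneCapacity d L h hb p
      < laneCapacity d L h hb s - laneCapacity d L h hb r := by
  have hpI : p ∈ Icc (0 : ℝ) 1 := ⟨hp, by linarith⟩
  have hqI : q ∈ Icc (0 : ℝ) 1 := ⟨by linarith, by linarith⟩
  have hrI : r ∈ Icc (0 : ℝ) 1 := ⟨by linarith, by linarith⟩
  have hsI : s ∈ Icc (0 : ℝ) 1 := ⟨by linarith, hs⟩
  rw [laneCapacity_sub_eq_mul_capacitySlope hL hhb hbh.le habar hpI hqI,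
    laneCapacity_sub_eq_mul_capacitySlope hL hhb hbh.le habar hrI hsI, heq]
  refine mul_lt_mul_of_pos_left
    (capacitySlope_lt hL hhb hbh habar hp hqI.1 hrI.2 hs (by linarith) (by linarith)) ?_
  rw [← heq]
  exact sub_pos.2 (strictMonoOn_laneExcess hd hL hhb hbh.le habar hpI hqI hpq)

end

theorem single_mixed_lane_general
    (n : ℕ) (abar d L h hb : ℝ)
    (habar : abar ∈ Set.Icc (0 : ℝ) 1)
    (hd : 0 < d) (hL : 0 < L) (hhb : 0 ≤ hb) (hbh : hb < h)
    (c : ℝ → ℝ) (hc : ∀ α, c α = d / (L + α ^ 2 * hb + (1 - α ^ 2) * h))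
    (αs : Fin n → ℝ)
    (hmem : ∀ i, αs i ∈ Set.Icc (0 : ℝ) 1)
    (hfeas : ∑ i, (αs i - abar) * c (αs i) = 0)
    (hopt : ∀ β : Fin n → ℝ, (∀ i, β i ∈ Set.Icc (0 : ℝ) 1) →
      (∑ i, (β i - abar) * c (β i) = 0) →
      ∑ i, c (β i) ≤ ∑ i, c (αs i)) :
    ∀ i j : Fin n, αs i ∈ Set.Ioo (0 : ℝ) 1 → αs j ∈ Set.Ioo (0 : ℝ) 1 →
      i = j := by
  obtain rfl : c = laneCapacity d L h hb := funext hc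
  intro i j hi hj
  exact eq_of_mem_Ioo_of_forall_sum_le (continuousOn_laneExcess hL hhb hbh.le)
    (strictMonoOn_laneExcess hd hL hhb hbh.le habar.2)
    (fun _ _ _ _ => laneCapacity_chord_lt hd hL hhb hbh habar.2) hmem
    (fun β hβ hsum => hopt β hβ (hsum.trans hfeas)) hi hj

/-- Any maximizer of total capacity subject to flow conservation has at most
one mixed lane, i.e. at most one coordinate in the open interval `(0,1)`. -/
theorem single_mixed_lane
    (n : ℕ) (hn : 1 ≤ n) (abar d L h hb : ℝ)
    (habar : abar ∈ Set.Icc (0 : ℝ) 1)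
    (hd : 0 < d) (hL : 0 < L) (hhb : 0 ≤ hb) (hbh : hb < h)
    (c : ℝ → ℝ) (hc : ∀ α, c α = d / (L + α ^ 2 * hb + (1 - α ^ 2) * h))
    (αs : Fin n → ℝ)
    (hmem : ∀ i, αs i ∈ Set.Icc (0 : ℝ) 1)
    (hfeas : ∑ i, (αs i - abar) * c (αs i) = 0)
    (hopt : ∀ β : Fin n → ℝ, (∀ i, β i ∈ Set.Icc (0 : ℝ) 1) →
      (∑ i, (β i - abar) * c (β i) = 0) →
      ∑ i, c (β i) ≤ ∑ i, c (αs i)) :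
    ∀ i j : Fin n, αs i ∈ Set.Ioo (0 : ℝ) 1 → αs j ∈ Set.Ioo (0 : ℝ) 1 →
      i = j :=
  single_mixed_lane_general n abar d L h hb habar hd hL hhb hbh c hc αs hmem hfeas hopt
end

section
/- The uniform assignment αᵢ = ᾱ for all i minimizes total capacity C(α) = Σᵢ c(αᵢ) over all α ∈ [0,1]ⁿ satisfying the constraint Σᵢ (αᵢ - ᾱ)·c(αᵢ) = 0, and the minimum value is n·c(ᾱ). -/
/-!
Writing the capacity as `c α = d / (A - k α²)` with `A = L + h`, `k = h - h̄ ≥ 0`, one has the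
exact identity
`c α - c ᾱ - λ (α - ᾱ) c α = d k (α - ᾱ)² / ((A - k α²)(A - k ᾱ²))`, `λ = 2 k ᾱ / (A - k ᾱ²)`,
so `c α ≥ c ᾱ + λ (α - ᾱ) c α` on `[0,1]`. Summing over the lanes, the constraint kills the
multiplier term and leaves `∑ c αᵢ ≥ n c ᾱ`.
-/

open Finset

theorem card_mul_le_sum_of_le_add_mul {ι : Type*} (s : Finset ι) (u v : ι → ℝ) (b μ : ℝ)
    (huv : ∀ i ∈ s, b + μ * v i ≤ u i) (hv : ∑ i ∈ s, v i = 0) :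
    #s * b ≤ ∑ i ∈ s, u i :=
  calc (#s : ℝ) * b = ∑ i ∈ s, (b + μ * v i) := by
        rw [sum_add_distrib, ← mul_sum, hv, sum_const, nsmul_eq_mul, mul_zero, add_zero]
    _ ≤ ∑ i ∈ s, u i := sum_le_sum huv

section InvQuadratic

variable {A k d x a : ℝ}

theorem div_sub_mul_sq_sub_tangent_eq (hx : A - k * x ^ 2 ≠ 0) (ha : A - k * a ^ 2 ≠ 0) :
    d / (A - k * x ^ 2) - d / (A - k * a ^ 2)
        - 2 * k * a / (A - k * a ^ 2) * ((x - a) * (d / (A - k * x ^ 2)))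
      = d * k * (x - a) ^ 2 / ((A - k * x ^ 2) * (A - k * a ^ 2)) := by
  field_simp
  ring

theorem div_sub_mul_sq_add_tangent_le (hd : 0 ≤ d) (hk : 0 ≤ k)
    (hx : 0 < A - k * x ^ 2) (ha : 0 < A - k * a ^ 2) :
    d / (A - k * a ^ 2) + 2 * k * a / (A - k * a ^ 2) * ((x - a) * (d / (A - k * x ^ 2)))
      ≤ d / (A - k * x ^ 2) := by
  have hgap := div_sub_mul_sq_sub_tangent_eq (d := d) hx.ne' ha.ne'
  have : 0 ≤ d * k * (x - a) ^ 2 / ((A - k * x ^ 2) * (A - k * a ^ 2)) := by positivity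
  linarith

end InvQuadratic

theorem uniform_minimizes_capacity_general
    (n : ℕ) (abar d L h hb : ℝ)
    (habar : abar ∈ Set.Icc (0 : ℝ) 1)
    (hd : 0 < d) (hL : 0 < L) (hhb : 0 ≤ hb) (hbh : hb ≤ h)
    (c : ℝ → ℝ) (hc : ∀ α, c α = d / (L + α ^ 2 * hb + (1 - α ^ 2) * h)) :
    (∑ _i : Fin n, (abar - abar) * c abar = 0) ∧
    (∀ αs : Fin n → ℝ, (∀ i, αs i ∈ Set.Icc (0 : ℝ) 1) →
      (∑ i, (αs i - abar) * c (αs i) = 0) →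
      (n : ℝ) * c abar ≤ ∑ i, c (αs i)) := by
  refine ⟨by simp, fun αs hαs hconstr => ?_⟩
  have hc' : ∀ α, c α = d / ((L + h) - (h - hb) * α ^ 2) := fun α => by rw [hc]; ring_nf
  have hpos : ∀ α ∈ Set.Icc (0 : ℝ) 1, 0 < (L + h) - (h - hb) * α ^ 2 := fun α hα => by
    nlinarith [pow_le_one₀ hα.1 hα.2 (n := 2)]
  have htangent : ∀ i ∈ univ, c abar + 2 * (h - hb) * abar / ((L + h) - (h - hb) * abar ^ 2)
      * ((αs i - abar) * c (αs i)) ≤ c (αs i) := fun i _ => by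
    simp only [hc']
    exact div_sub_mul_sq_add_tangent_le hd.le (by linarith) (hpos _ (hαs i)) (hpos _ habar)
  simpa using card_mul_le_sum_of_le_add_mul univ _ _ _ _ htangent hconstr

/-- The uniform assignment `αᵢ = ᾱ` minimizes the total capacity over
feasible assignments, and the minimum value is `n·c(ᾱ)`. -/
theorem uniform_minimizes_capacity
    (n : ℕ) (hn : 1 ≤ n) (abar d L h hb : ℝ)
    (habar : abar ∈ Set.Icc (0 : ℝ) 1)
    (hd : 0 < d) (hL : 0 < L) (hhb : 0 ≤ hb) (hbh : hb ≤ h)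
    (c : ℝ → ℝ) (hc : ∀ α, c α = d / (L + α ^ 2 * hb + (1 - α ^ 2) * h)) :
    (∑ _i : Fin n, (abar - abar) * c abar = 0) ∧
    (∀ αs : Fin n → ℝ, (∀ i, αs i ∈ Set.Icc (0 : ℝ) 1) →
      (∑ i, (αs i - abar) * c (αs i) = 0) →
      (n : ℝ) * c abar ≤ ∑ i, c (αs i)) :=
  uniform_minimizes_capacity_general n abar d L h hb habar hd hL hhb hbh c hc
end

section
/- For the upper-bound capacity model, every feasible assignment has the same total capacity: if β ∈ [0,1]ⁿ satisfies Σᵢ (βᵢ - ᾱ)·c^UB(βᵢ) = 0, then Σᵢ c^UB(βᵢ) = n·c^UB(ᾱ). -/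
/-!
Writing `c(β) = d / D(β)` with `D(β) = (L + h) + (h̄ - h) β` affine, the difference
`c(β) - c(ᾱ) = d (D(ᾱ) - D(β)) / (D(β) D(ᾱ))` is a fixed multiple of `(β - ᾱ) c(β)`.
Summing over the lanes, feasibility kills the right-hand side.
-/

open Finset

section AffineReciprocal

variable {d p q x y : ℝ}

theorem div_affine_sub_div_affine (hx : p + q * x ≠ 0) (hy : p + q * y ≠ 0) :
    d / (p + q * y) - d / (p + q * x) =
      -q / (p + q * x) * ((y - x) * (d / (p + q * y))) := by
  field_simp
  ring

theorem sum_div_affine_eq_card_mul {ι : Type*} (s : Finset ι) (β : ι → ℝ)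
    (hβ : ∀ i ∈ s, p + q * β i ≠ 0) (hx : p + q * x ≠ 0)
    (hfeas : ∑ i ∈ s, (β i - x) * (d / (p + q * β i)) = 0) :
    ∑ i ∈ s, d / (p + q * β i) = s.card * (d / (p + q * x)) := by
  have hdiff : ∑ i ∈ s, (d / (p + q * β i) - d / (p + q * x)) = 0 := by
    rw [sum_congr rfl fun i hi => div_affine_sub_div_affine hx (hβ i hi), ← mul_sum,
      hfeas, mul_zero]
  rwa [sum_sub_distrib, sum_const, nsmul_eq_mul, sub_eq_zero] at hdiff

end AffineReciprocal

theorem spacing_pos {L h hb β : ℝ} (hbh : hb ≤ h) (hLhb : 0 < L + hb)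
    (hβ : β ∈ Set.Icc (0 : ℝ) 1) : 0 < L + h + (hb - h) * β := by
  nlinarith [hβ.2]

theorem upper_bound_capacity_invariant_general
    (n : ℕ) (abar d L h hb : ℝ)
    (habar : abar ∈ Set.Icc (0 : ℝ) 1)
    (hbh : hb ≤ h) (hLhb : 0 < L + hb)
    (cUB : ℝ → ℝ) (hcUB : ∀ β, cUB β = d / (L + β * hb + (1 - β) * h)) :
    ∀ βs : Fin n → ℝ, (∀ i, βs i ∈ Set.Icc (0 : ℝ) 1) →
      (∑ i, (βs i - abar) * cUB (βs i) = 0) →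
      ∑ i, cUB (βs i) = (n : ℝ) * cUB abar := by
  intro βs hβs hfeas
  have hc : ∀ β, cUB β = d / (L + h + (hb - h) * β) := fun β => by rw [hcUB]; ring_nf
  simp only [hc] at hfeas ⊢
  simpa using sum_div_affine_eq_card_mul univ βs
    (fun i _ => (spacing_pos hbh hLhb (hβs i)).ne') (spacing_pos hbh hLhb habar).ne' hfeas

/-- Under the upper-bound capacity model, every feasible assignment has the
same total capacity `n·c^UB(ᾱ)`. -/
theorem upper_bound_capacity_invariant
    (n : ℕ) (hn : 1 ≤ n) (abar d L h hb : ℝ)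
    (habar : abar ∈ Set.Icc (0 : ℝ) 1)
    (hd : 0 < d) (hL : 0 < L) (hhb : 0 ≤ hb) (hbh : hb ≤ h) (hLhb : 0 < L + hb)
    (cUB : ℝ → ℝ) (hcUB : ∀ β, cUB β = d / (L + β * hb + (1 - β) * h)) :
    ∀ βs : Fin n → ℝ, (∀ i, βs i ∈ Set.Icc (0 : ℝ) 1) →
      (∑ i, (βs i - abar) * cUB (βs i) = 0) →
      ∑ i, cUB (βs i) = (n : ℝ) * cUB abar :=
  upper_bound_capacity_invariant_general n abar d L h hb habar hbh hLhb cUB hcUB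
end

section
/- For any ᾱ ∈ [0,1], n ≥ 1, L ≥ 0, and 0 ≤ h̄ < h with L + h̄ > 0, the ratio of optimal-ordering capacity to worst-case Bernoulli capacity satisfies n·c^UB(ᾱ) / (n·c(ᾱ)) ≤ 2·(L + h - √((L+h)(L+h̄))) / (h - h̄). -/
/-!
Both capacities have the form `d / D`, so the ratio is `D_c / D_UB`. With `A = L + h`,
`B = L + h̄` and `x = D_UB = A - ᾱ (A - B)`, eliminating `ᾱ` gives
`(A - B) · D_c = 2 A x - A B - x²`, and AM-GM `x² + A B ≥ 2 x √(A B)` yields the bound.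
-/

open Real

theorem sub_sq_mul_div_sub_mul_le {A B α : ℝ} (hBA : B < A) (hAB : 0 ≤ A * B)
    (hx : 0 < A - α * (A - B)) :
    (A - α ^ 2 * (A - B)) / (A - α * (A - B)) ≤ 2 * (A - √(A * B)) / (A - B) := by
  set x := A - α * (A - B)
  set s := √(A * B)
  rw [div_le_div_iff₀ hx (sub_pos.2 hBA)]
  have hs : s ^ 2 = A * B := sq_sqrt hAB
  calc (A - α ^ 2 * (A - B)) * (A - B) = 2 * A * x - (s ^ 2 + x ^ 2) := by
        rw [hs]; ring
    _ ≤ 2 * A * x - 2 * s * x := by linarith [two_mul_le_add_sq s x]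
    _ = 2 * (A - s) * x := by ring

theorem price_of_negligence_bound_general
    (n : ℕ) (hn : 1 ≤ n) (abar d L h hb : ℝ)
    (habar : abar ∈ Set.Icc (0 : ℝ) 1)
    (hd : 0 < d) (hbh : hb < h) (hLhb : 0 < L + hb)
    (c cUB : ℝ → ℝ)
    (hc : ∀ α, c α = d / (L + α ^ 2 * hb + (1 - α ^ 2) * h))
    (hcUB : ∀ α, cUB α = d / (L + α * hb + (1 - α) * h)) :
    (n : ℝ) * cUB abar / ((n : ℝ) * c abar) ≤
      2 * (L + h - Real.sqrt ((L + h) * (L + hb))) / (h - hb) := by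
  have hn0 : (n : ℝ) ≠ 0 := Nat.cast_ne_zero.2 (by omega)
  rw [mul_div_mul_left _ _ hn0, hc, hcUB, div_div_div_cancel_left' _ _ hd.ne']
  have hA : 0 < L + h := by linarith
  have hx : 0 < L + h - abar * (L + h - (L + hb)) := by nlinarith [habar.2]
  convert sub_sq_mul_div_sub_mul_le (by linarith) (mul_pos hA hLhb).le hx using 2 <;> ring

/-- Price of negligence bound: the ratio of the optimally ordered capacity to
the worst-case Bernoulli capacity is at most
`2(L + h - √((L+h)(L+h̄)))/(h - h̄)`. -/
theorem price_of_negligence_bound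
    (n : ℕ) (hn : 1 ≤ n) (abar d L h hb : ℝ)
    (habar : abar ∈ Set.Icc (0 : ℝ) 1)
    (hd : 0 < d) (hL : 0 ≤ L) (hhb : 0 ≤ hb) (hbh : hb < h) (hLhb : 0 < L + hb)
    (c cUB : ℝ → ℝ)
    (hc : ∀ α, c α = d / (L + α ^ 2 * hb + (1 - α ^ 2) * h))
    (hcUB : ∀ α, cUB α = d / (L + α * hb + (1 - α) * h)) :
    (n : ℝ) * cUB abar / ((n : ℝ) * c abar) ≤
      2 * (L + h - Real.sqrt ((L + h) * (L + hb))) / (h - hb) :=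
  price_of_negligence_bound_general n hn abar d L h hb habar hd hbh hLhb c cUB hc hcUB
end

section
/- The price of negligence is at most 2: for all L ≥ 0 and 0 ≤ h̄ < h with L + h̄ > 0, 2·(L + h - √((L+h)(L+h̄))) / (h - h̄) ≤ 2, with the bound approached as L → 0 and h̄ → 0. -/
/-! With `a = L + h̄ ≤ b = L + h`, the bound reads `b - √(b a) ≤ b - a`, i.e. the geometric mean
`√(b a)` is at least the smaller number `a`. At `L = h̄ = 0` the geometric mean vanishes. -/

namespace Real

theorem le_sqrt_mul_of_le {a b : ℝ} (ha : 0 ≤ a) (hab : a ≤ b) : a ≤ √(b * a) :=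
  calc a = √(a * a) := (sqrt_mul_self ha).symm
    _ ≤ √(b * a) := sqrt_le_sqrt (mul_le_mul_of_nonneg_right hab ha)

theorem two_mul_sub_sqrt_mul_div_sub_le_two {a b : ℝ} (ha : 0 ≤ a) (hab : a ≤ b) :
    2 * (b - √(b * a)) / (b - a) ≤ 2 := by
  refine div_le_of_le_mul₀ (sub_nonneg.mpr hab) zero_le_two ?_
  linarith [le_sqrt_mul_of_le ha hab]

end Real

/-- The price of negligence is at most `2`, with the bound attained in the
limit `L = 0`, `h̄ = 0`. -/
theorem price_of_negligence_le_two
    (h : ℝ) (hh : 0 < h) :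
    (∀ L hb : ℝ, 0 ≤ L → 0 ≤ hb → hb < h → 0 < L + hb →
      2 * (L + h - Real.sqrt ((L + h) * (L + hb))) / (h - hb) ≤ 2) ∧
    2 * (0 + h - Real.sqrt ((0 + h) * (0 + 0))) / (h - 0) = 2 := by
  refine ⟨fun L hb hL hhb hlt _ => ?_, ?_⟩
  · have h_sub : L + h - (L + hb) = h - hb := by ring
    rw [← h_sub]
    exact Real.two_mul_sub_sqrt_mul_div_sub_le_two (by positivity) (by linarith)
  · simp only [zero_add, mul_zero, Real.sqrt_zero, sub_zero]
    field_simp [hh.ne']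
end

section
/- The price of no control satisfies Γ ≤ 2n/(2n-1) for n ≥ 1 lanes: the ratio of the capacity n·c^UB(ᾱ) (optimal ordering) to the optimal Bernoulli lane-assignment capacity C(α*) is at most 2n(L+h) / ((2n-1)(L+h) + √((L+h)(L+h̄))), which is at most 2n/(2n-1). -/
/-!
Raise the lanes from `α = 0` to `α = 1` one after the other (lane `i` carries `t - i` clamped to
`[0, 1]`). The balance `∑ (αᵢ - ᾱ) c(αᵢ)` is continuous in `t`, nonpositive at `t = 0` and
nonnegative at `t = n`, so it vanishes at some feasible assignment with at most one mixed lane.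

For a balanced assignment, `S(ᾱ) ∑ c(αᵢ) = ∑ c(αᵢ) S(αᵢ)`, where `S(p) = L + p h̄ + (1 - p) h` is
the affine spacing, so that `c = d / S(α²)` and `c^UB = d / S(α)`. Each summand equals `d` on a pure
lane, and on the mixed lane `S(α) / S(α²) ≥ (A + s) / (2A)` with `A = L + h`, `s = √(A (L + h̄))`,
since `2A S(α) - (A + s) S(α²) = (A - s) (A - α (A + s))² / A`. Hence
`C(α*) ≥ c^UB(ᾱ) ((2n - 1) A + s) / (2A)`.
-/

open Set

lemma card_sub_one_mul_add_le_sum {ι : Type*} [Fintype ι] (f : ι → ℝ) {m M : ℝ}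
    (hm : ∀ i, m ≤ f i) (hmM : m ≤ M) (hpair : ∀ i j, i ≠ j → M ≤ f i ∨ M ≤ f j) :
    (Fintype.card ι - 1) * M + m ≤ ∑ i, f i := by
  classical
  by_cases hall : ∀ i, M ≤ f i
  · calc (Fintype.card ι - 1) * M + m ≤ Fintype.card ι * M := by linarith
      _ ≤ ∑ i, f i := by
        simpa using Finset.card_nsmul_le_sum Finset.univ f M fun i _ => hall i
  · obtain ⟨j, hj⟩ := not_forall.1 hall
    have hrest : ∀ i ∈ Finset.univ.erase j, M ≤ f i := fun i hi =>
      (hpair i j (Finset.ne_of_mem_erase hi)).resolve_right hj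
    have hcard : ((Finset.univ.erase j).card : ℝ) = Fintype.card ι - 1 := by
      rw [Finset.card_erase_of_mem (Finset.mem_univ j), Finset.card_univ,
        Nat.cast_pred (Fintype.card_pos_iff.2 ⟨j⟩)]
    calc (Fintype.card ι - 1) * M + m ≤ ∑ i ∈ Finset.univ.erase j, f i + f j := by
          have := Finset.card_nsmul_le_sum _ f M hrest
          rw [nsmul_eq_mul, hcard] at this
          linarith [hm j]
      _ = ∑ i, f i := by rw [add_comm, Finset.add_sum_erase _ _ (Finset.mem_univ j)]

noncomputable def sweep (t : ℝ) (i : ℕ) : ℝ := projIcc (0 : ℝ) 1 zero_le_one (t - i)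

lemma sweep_mem_Icc (t : ℝ) (i : ℕ) : sweep t i ∈ Icc (0 : ℝ) 1 := Subtype.prop _

lemma continuous_sweep (i : ℕ) : Continuous fun t => sweep t i :=
  continuous_subtype_val.comp (continuous_projIcc.comp (continuous_sub_right _))

lemma sweep_of_le {t : ℝ} {i : ℕ} (ht : t ≤ i) : sweep t i = 0 := by
  rw [sweep, projIcc_of_le_left _ (by linarith)]

lemma sweep_of_ge {t : ℝ} {i : ℕ} (ht : i + 1 ≤ t) : sweep t i = 1 := by
  rw [sweep, projIcc_of_right_le _ (by linarith)]

lemma sweep_eq_zero_or_one_of_ne {i j : ℕ} (hij : i ≠ j) (t : ℝ) :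
    (sweep t i = 0 ∨ sweep t i = 1) ∨ (sweep t j = 0 ∨ sweep t j = 1) := by
  wlog hlt : i < j generalizing i j
  · exact (this hij.symm (hij.lt_or_gt.resolve_left hlt)).symm
  have hij' : (i : ℝ) + 1 ≤ j := by exact_mod_cast hlt
  rcases le_total ((i : ℝ) + 1) t with ht | ht
  · exact .inl (.inr (sweep_of_ge ht))
  · exact .inr (.inl (sweep_of_le (ht.trans hij')))

lemma exists_sum_sweep_eq_zero {F : ℝ → ℝ} (hF : ContinuousOn F (Icc 0 1)) (h0 : F 0 ≤ 0)
    (h1 : 0 ≤ F 1) (n : ℕ) : ∃ t, ∑ i : Fin n, F (sweep t i) = 0 := by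
  have hcont : Continuous fun t => ∑ i : Fin n, F (sweep t i) :=
    continuous_finsetSum _ fun i _ =>
      hF.comp_continuous (continuous_sweep i) fun t => sweep_mem_Icc t i
  have hstart : ∑ i : Fin n, F (sweep 0 i) = n * F 0 := by
    simp [sweep_of_le (Nat.cast_nonneg _)]
  have hend : ∑ i : Fin n, F (sweep n i) = n * F 1 := by
    have : ∀ i : Fin n, sweep n i = 1 := fun i => sweep_of_ge (by exact_mod_cast i.isLt)
    simp [this]
  obtain ⟨t, -, ht⟩ := intermediate_value_Icc (Nat.cast_nonneg n) hcont.continuousOn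
    ⟨hstart ▸ mul_nonpos_of_nonneg_of_nonpos n.cast_nonneg h0,
      hend ▸ mul_nonneg n.cast_nonneg h1⟩
  exact ⟨t, ht⟩

def spacing (L h hb p : ℝ) : ℝ := L + p * hb + (1 - p) * h

section Spacing

variable {L h hb : ℝ}

lemma spacing_pos_s11 (hLhb : 0 < L + hb) (hbh : hb ≤ h) {p : ℝ} (hp : p ∈ Icc 0 1) :
    0 < spacing L h hb p := by
  unfold spacing
  nlinarith [hp.1, hp.2]

lemma continuousOn_div_spacing_sq (hLhb : 0 < L + hb) (hbh : hb ≤ h) (d : ℝ) :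
    ContinuousOn (fun x => d / spacing L h hb (x ^ 2)) (Icc 0 1) :=
  continuousOn_const.div (by unfold spacing; fun_prop) fun x hx =>
    (spacing_pos_s11 hLhb hbh ⟨sq_nonneg x, pow_le_one₀ hx.1 hx.2⟩).ne'

lemma exists_balanced_sweep (hLhb : 0 < L + hb) (hbh : hb ≤ h) {abar d : ℝ} (hd : 0 < d)
    (habar : abar ∈ Icc (0 : ℝ) 1) (n : ℕ) :
    ∃ t, ∑ i : Fin n, (sweep t i - abar) * (d / spacing L h hb (sweep t i ^ 2)) = 0 := by
  have hc_pos (x : ℝ) (hx : x ∈ Icc (0 : ℝ) 1) : 0 < d / spacing L h hb (x ^ 2) :=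
    div_pos hd (spacing_pos_s11 hLhb hbh ⟨sq_nonneg x, pow_le_one₀ hx.1 hx.2⟩)
  exact exists_sum_sweep_eq_zero (F := fun x => (x - abar) * (d / spacing L h hb (x ^ 2)))
    ((continuousOn_id.sub continuousOn_const).mul (continuousOn_div_spacing_sq hLhb hbh d))
    (mul_nonpos_of_nonpos_of_nonneg (by linarith [habar.1]) (hc_pos 0 (by norm_num)).le)
    (mul_nonneg (by linarith [habar.2]) (hc_pos 1 (by norm_num)).le) n

lemma spacing_mul_sum_eq_sum_mul_spacing {ι : Type*} [Fintype ι] (abar : ℝ) (α c : ι → ℝ)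
    (hbal : ∑ i, (α i - abar) * c i = 0) :
    spacing L h hb abar * ∑ i, c i = ∑ i, c i * spacing L h hb (α i) := by
  have hterm : ∀ i, c i * spacing L h hb (α i) =
      spacing L h hb abar * c i - (h - hb) * ((α i - abar) * c i) := by
    intro i
    unfold spacing
    ring
  simp_rw [hterm, Finset.sum_sub_distrib, ← Finset.mul_sum, hbal, mul_zero, sub_zero]

lemma add_sqrt_div_le_spacing_div (hLhb : 0 < L + hb) (hbh : hb ≤ h) {x : ℝ}
    (hx : x ∈ Icc 0 1) :
    (L + h + √((L + h) * (L + hb))) / (2 * (L + h)) ≤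
      spacing L h hb x / spacing L h hb (x ^ 2) := by
  have hA : 0 < L + h := by linarith
  have hx2 : x ^ 2 ∈ Icc (0 : ℝ) 1 := ⟨sq_nonneg x, pow_le_one₀ hx.1 hx.2⟩
  set s := √((L + h) * (L + hb))
  have hs2 : s ^ 2 = (L + h) * (L + hb) := Real.sq_sqrt (by positivity)
  have hsA : s ≤ L + h := by nlinarith [Real.sqrt_nonneg ((L + h) * (L + hb))]
  rw [div_le_div_iff₀ (by positivity) (spacing_pos_s11 hLhb hbh hx2)]
  have key : (L + h) * (spacing L h hb x * (2 * (L + h)) -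
      (L + h + s) * spacing L h hb (x ^ 2)) = (L + h - s) * (L + h - x * (L + h + s)) ^ 2 := by
    unfold spacing
    linear_combination (x ^ 2 * (L + h + s) - 2 * (L + h) * x) * hs2
  nlinarith [mul_nonneg (sub_nonneg.2 hsA) (sq_nonneg (L + h - x * (L + h + s)))]

lemma spacing_div_spacing_sq_eq_one (hLhb : 0 < L + hb) (hbh : hb ≤ h) {p : ℝ}
    (hp : p = 0 ∨ p = 1) : spacing L h hb p / spacing L h hb (p ^ 2) = 1 := by
  have hp01 : p ∈ Icc (0 : ℝ) 1 := by rcases hp with rfl | rfl <;> norm_num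
  have hp2 : p ^ 2 = p := by rcases hp with rfl | rfl <;> norm_num
  rw [hp2, div_self (spacing_pos_s11 hLhb hbh hp01).ne']

lemma mul_le_spacing_mul_sum_sweep (hLhb : 0 < L + hb) (hbh : hb ≤ h) {n : ℕ} {abar d t : ℝ}
    (hd : 0 ≤ d)
    (hbal : ∑ i : Fin n, (sweep t i - abar) * (d / spacing L h hb (sweep t i ^ 2)) = 0) :
    d * ((2 * n - 1) * (L + h) + √((L + h) * (L + hb))) ≤
      2 * (L + h) * (spacing L h hb abar * ∑ i : Fin n, d / spacing L h hb (sweep t i ^ 2)) := by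
  have hA : 0 < L + h := by linarith
  have hratio := card_sub_one_mul_add_le_sum
    (fun i : Fin n => spacing L h hb (sweep t i) / spacing L h hb (sweep t i ^ 2))
    (fun i => add_sqrt_div_le_spacing_div hLhb hbh (sweep_mem_Icc t i))
    ((add_sqrt_div_le_spacing_div hLhb hbh (x := 0) ⟨le_rfl, zero_le_one⟩).trans_eq
      (spacing_div_spacing_sq_eq_one hLhb hbh (.inl rfl)))
    fun i j hij => (sweep_eq_zero_or_one_of_ne (Fin.val_ne_of_ne hij) t).imp
      (spacing_div_spacing_sq_eq_one hLhb hbh · |>.ge)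
      (spacing_div_spacing_sq_eq_one hLhb hbh · |>.ge)
  rw [Fintype.card_fin, mul_one] at hratio
  calc _ = 2 * (L + h) * (d * (n - 1 + (L + h + √((L + h) * (L + hb))) / (2 * (L + h)))) := by
        field_simp
        ring
    _ ≤ 2 * (L + h) *
          (d * ∑ i : Fin n, spacing L h hb (sweep t i) / spacing L h hb (sweep t i ^ 2)) := by
        gcongr
    _ = 2 * (L + h) *
          ∑ i : Fin n, d / spacing L h hb (sweep t i ^ 2) * spacing L h hb (sweep t i) := by
        rw [Finset.mul_sum]
        congr 1
        exact Finset.sum_congr rfl fun i _ => by ring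
    _ = _ := by rw [spacing_mul_sum_eq_sum_mul_spacing abar _ _ hbal]

end Spacing

theorem price_of_no_control_bound_general
    (n : ℕ) (hn : 1 ≤ n) (abar d L h hb : ℝ)
    (habar : abar ∈ Set.Icc (0 : ℝ) 1)
    (hd : 0 < d) (hbh : hb < h) (hLhb : 0 < L + hb)
    (c cUB : ℝ → ℝ)
    (hc : ∀ α, c α = d / (L + α ^ 2 * hb + (1 - α ^ 2) * h))
    (hcUB : ∀ α, cUB α = d / (L + α * hb + (1 - α) * h))
    (Cstar : ℝ)
    (hCstar : IsGreatest {S : ℝ | ∃ αs : Fin n → ℝ,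
      (∀ i, αs i ∈ Set.Icc (0 : ℝ) 1) ∧
      (∑ i, (αs i - abar) * c (αs i) = 0) ∧ S = ∑ i, c (αs i)} Cstar) :
    (n : ℝ) * cUB abar / Cstar ≤
      2 * n * (L + h) /
        ((2 * n - 1) * (L + h) + Real.sqrt ((L + h) * (L + hb))) ∧
    2 * n * (L + h) /
        ((2 * n - 1) * (L + h) + Real.sqrt ((L + h) * (L + hb))) ≤
      2 * n / (2 * n - 1) := by
  obtain rfl : c = fun α => d / spacing L h hb (α ^ 2) := funext hc
  have hA : 0 < L + h := by linarith
  have hQ : 0 < spacing L h hb abar := spacing_pos_s11 hLhb hbh.le habar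
  obtain ⟨t, hbal⟩ := exists_balanced_sweep hLhb hbh.le hd habar n
  have hS := hCstar.2 ⟨fun i => sweep t i, fun i => sweep_mem_Icc t i, hbal, rfl⟩
  have hQC := (mul_le_spacing_mul_sum_sweep hLhb hbh.le hd.le hbal).trans
    (mul_le_mul_of_nonneg_left (mul_le_mul_of_nonneg_left hS hQ.le) (by positivity))
  set s := √((L + h) * (L + hb))
  have hn' : (1 : ℝ) ≤ n := by exact_mod_cast hn
  have hden : 0 < (2 * n - 1) * (L + h) + s := by
    nlinarith [Real.sqrt_nonneg ((L + h) * (L + hb))]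
  have hC : 0 < Cstar := by
    nlinarith [mul_pos hd hden, mul_pos (mul_pos two_pos hA) hQ]
  refine ⟨?_, ?_⟩
  · rw [hcUB, div_le_div_iff₀ hC hden]
    calc n * (d / spacing L h hb abar) * ((2 * n - 1) * (L + h) + s)
        = n * (d * ((2 * n - 1) * (L + h) + s)) / spacing L h hb abar := by ring
      _ ≤ n * (2 * (L + h) * (spacing L h hb abar * Cstar)) / spacing L h hb abar := by gcongr
      _ = 2 * n * (L + h) * Cstar := by field_simp
  · calc 2 * n * (L + h) / ((2 * n - 1) * (L + h) + s)
          ≤ 2 * n * (L + h) / ((2 * n - 1) * (L + h)) := by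
            gcongr
            · nlinarith
            · exact le_add_of_nonneg_right (Real.sqrt_nonneg _)
      _ = 2 * n / (2 * n - 1) := mul_div_mul_right _ _ hA.ne'

/-- Price of no control bound: the ratio of the optimally ordered capacity
`n·c^UB(ᾱ)` to the optimal Bernoulli lane-assignment capacity `C(α*)` is at
most `2n(L+h)/((2n-1)(L+h) + √((L+h)(L+h̄)))`, which is at most `2n/(2n-1)`. -/
theorem price_of_no_control_bound
    (n : ℕ) (hn : 1 ≤ n) (abar d L h hb : ℝ)
    (habar : abar ∈ Set.Icc (0 : ℝ) 1)
    (hd : 0 < d) (hL : 0 ≤ L) (hhb : 0 ≤ hb) (hbh : hb < h) (hLhb : 0 < L + hb)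
    (c cUB : ℝ → ℝ)
    (hc : ∀ α, c α = d / (L + α ^ 2 * hb + (1 - α ^ 2) * h))
    (hcUB : ∀ α, cUB α = d / (L + α * hb + (1 - α) * h))
    (Cstar : ℝ)
    (hCstar : IsGreatest {S : ℝ | ∃ αs : Fin n → ℝ,
      (∀ i, αs i ∈ Set.Icc (0 : ℝ) 1) ∧
      (∑ i, (αs i - abar) * c (αs i) = 0) ∧ S = ∑ i, c (αs i)} Cstar) :
    (n : ℝ) * cUB abar / Cstar ≤
      2 * n * (L + h) /
        ((2 * n - 1) * (L + h) + Real.sqrt ((L + h) * (L + hb))) ∧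
    2 * n * (L + h) /
        ((2 * n - 1) * (L + h) + Real.sqrt ((L + h) * (L + hb))) ≤
      2 * n / (2 * n - 1) :=
  price_of_no_control_bound_general n hn abar d L h hb habar hd hbh hLhb c cUB hc hcUB Cstar hCstar
end

section
/- The map α ↦ α·c(α), where c(α) = d/(L + α²h̄ + (1-α²)h), is strictly increasing on [0,1] whenever d > 0, L ≥ 0, 0 ≤ h̄ ≤ h, and L + h̄ > 0; hence for fixed levels of the other lanes, the flow-conservation constraint determines the mixed lane's autonomy level uniquely. -/
/-- The autonomous flow `α ↦ α·c(α)` is strictly increasing on `[0,1]`. -/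
theorem autonomous_flow_strict_mono
    (d L h hb : ℝ) (hd : 0 < d) (hL : 0 ≤ L) (hhb : 0 ≤ hb) (hbh : hb ≤ h)
    (hLhb : 0 < L + hb)
    (c : ℝ → ℝ) (hc : ∀ α, c α = d / (L + α ^ 2 * hb + (1 - α ^ 2) * h)) :
    ∀ a a' : ℝ, 0 ≤ a → a < a' → a' ≤ 1 → a * c a < a' * c a' := by
  intro a a' ha haa ha1
  have ha1' : a ≤ 1 := le_trans (le_of_lt haa) ha1
  have hDa : 0 < L + a ^ 2 * hb + (1 - a ^ 2) * h := by
    nlinarith [mul_nonneg (by nlinarith : (0:ℝ) ≤ 1 - a ^ 2) (sub_nonneg.mpr hbh), sq_nonneg a]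
  have hDa' : 0 < L + a' ^ 2 * hb + (1 - a' ^ 2) * h := by
    have ha'0 : 0 ≤ a' := le_trans ha (le_of_lt haa)
    nlinarith [mul_nonneg (by nlinarith : (0:ℝ) ≤ 1 - a' ^ 2) (sub_nonneg.mpr hbh), sq_nonneg a']
  rw [hc, hc, mul_div_assoc', mul_div_assoc', div_lt_div_iff₀ hDa hDa']
  nlinarith [mul_pos hd (sub_pos.mpr haa), mul_nonneg ha (le_of_lt hd),
    mul_nonneg (mul_nonneg ha (le_trans ha (le_of_lt haa))) (sub_nonneg.mpr hbh),
    mul_pos hd (mul_pos (sub_pos.mpr haa) hLhb), sq_nonneg (a + a'), sq_nonneg (a - a')]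
end
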